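/- Let k be an odd positive integer and let f : 𝔻² → ℂ be holomorphic and symmetric, i.e., f(z₁, z₂) = f(z₂, z₁) for all (z₁, z₂) ∈ 𝔻². If (∂₁^i f)(z, z) = 0 for all z ∈ 𝔻 and all 0 ≤ i ≤ k − 1, then (∂₁^k f)(z, z) = 0 for all z ∈ 𝔻. (The key claim in the proof of Theorem 2.8(ii) showing S_k = {0} for odd k when the Hilbert space consists of symmetric functions.) -/

import Mathlib

open Metric Set

/-- The partial derivative of a function of two complex variables with respect to
the first variable. -/
noncomputable def d1 (f : ℂ × ℂ → ℂ) : ℂ × ℂ → ℂ :=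
  fun p => deriv (fun z => f (z, p.2)) p.1

open Finset Nat Filter Topology

/-!
Put `a(v) = ∂₁ᵏ f(v, v) / k!`. As the lower derivatives vanish on the diagonal, Cauchy estimates
on the slices `f(·, v)` give `f(v + y, v) = a(v) yᵏ + O(|y|ᵏ⁺¹)` uniformly for `v` near `z`.
Comparing `f(u, v) ≈ a(v) (u - v)ᵏ` with `f(v, u) ≈ a(u) (v - u)ᵏ = -a(u) (u - v)ᵏ` (`k` odd)
through the symmetry gives `|a(u) + a(v)| = O(|u - v|)` for `u ≠ v` near `z`, which forces
`a(z) = 0`.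
-/

theorem iterate_d1_apply (f : ℂ × ℂ → ℂ) (n : ℕ) (z w : ℂ) :
    d1^[n] f (z, w) = iteratedDeriv n (fun u => f (u, w)) z := by
  rw [iteratedDeriv_eq_iterate]
  induction n generalizing z with
  | zero => rfl
  | succ n ih =>
    rw [Function.iterate_succ_apply', Function.iterate_succ_apply']
    exact congrArg (deriv · z) (funext ih)

theorem Complex.norm_sub_taylor_le_of_forall_mem_sphere_norm_le
    {E : Type*} [NormedAddCommGroup E] [NormedSpace ℂ E] [CompleteSpace E]
    {g : ℂ → E} {c : ℂ} {R M : ℝ} (hR : 0 < R)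
    (hg : DifferentiableOn ℂ g (closedBall c R)) (hM : ∀ z ∈ sphere c R, ‖g z‖ ≤ M) (n : ℕ)
    {y : ℂ} (hy : ‖y‖ ≤ R / 2) :
    ‖g (c + y) - ∑ i ∈ range n, (i ! : ℂ)⁻¹ • y ^ i • iteratedDeriv i g c‖ ≤
      2 * M * (‖y‖ / R) ^ n := by
  set r := ‖y‖ / R
  have hr : r ≤ 1 / 2 := by rw [div_le_iff₀ hR]; linarith
  have hM₀ : 0 ≤ M := by
    obtain ⟨z, hz⟩ := (NormedSpace.sphere_nonempty (x := c)).mpr hR.le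
    exact (norm_nonneg _).trans (hM z hz)
  have htaylor := Complex.hasSum_taylorSeries_on_ball (hg.mono ball_subset_closedBall)
    (z := c + y) (by rw [mem_ball_iff_norm, add_sub_cancel_left]; linarith)
  simp only [add_sub_cancel_left] at htaylor
  have hterm : ∀ i, ‖(i ! : ℂ)⁻¹ • y ^ i • iteratedDeriv i g c‖ ≤ M * r ^ i := by
    intro i
    have hcauchy := Complex.norm_iteratedDeriv_le_of_forall_mem_sphere_norm_le i hR
      (hg.diffContOnCl_ball subset_rfl) hM
    rw [norm_smul, norm_smul, norm_inv, norm_pow, Complex.norm_natCast, div_pow]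
    calc (i ! : ℝ)⁻¹ * (‖y‖ ^ i * ‖iteratedDeriv i g c‖)
        ≤ (i ! : ℝ)⁻¹ * (‖y‖ ^ i * (i ! * M / R ^ i)) := by gcongr
      _ = M * (‖y‖ ^ i / R ^ i) := by field_simp
  have hgeom : HasSum (fun i => M * r ^ n * r ^ i) (M * r ^ n * (1 - r)⁻¹) :=
    (hasSum_geometric_of_lt_one (by positivity) (by linarith)).mul_left _
  calc _ ≤ M * r ^ n * (1 - r)⁻¹ :=
        ((hasSum_nat_add_iff' n).mpr htaylor).norm_le_of_bounded hgeom fun i =>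
          (hterm (i + n)).trans_eq (by ring)
    _ ≤ M * r ^ n * 2 := by
        gcongr
        rw [inv_le_comm₀ (by linarith) two_pos]
        linarith
    _ = 2 * M * r ^ n := by ring

theorem exists_norm_sub_taylor_d1_le {f : ℂ × ℂ → ℂ} {U : Set (ℂ × ℂ)} (hU : IsOpen U)
    (hf : DifferentiableOn ℂ f U) {p : ℂ × ℂ} (hp : p ∈ U) (n : ℕ) :
    ∃ δ > 0, closedBall p δ ⊆ U ∧ ∃ C, ∀ q ∈ closedBall p δ, ∀ y : ℂ, ‖y‖ ≤ δ →
      ‖f (q.1 + y, q.2) - ∑ i ∈ range n, (i ! : ℂ)⁻¹ * y ^ i * d1^[i] f q‖ ≤ C * ‖y‖ ^ n := by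
  obtain ⟨ε, hε, hεU⟩ := Metric.isOpen_iff.mp hU p hp
  have hK : closedBall p (ε / 2) ⊆ U := (closedBall_subset_ball (by linarith)).trans hεU
  obtain ⟨M, hM⟩ := (isCompact_closedBall p (ε / 2)).exists_bound_of_continuousOn
    (hf.continuousOn.mono hK)
  refine ⟨ε / 6, by positivity, (closedBall_subset_closedBall (by linarith)).trans hK,
    2 * M / (ε / 3) ^ n, ?_⟩
  rintro ⟨x, w⟩ hq y hy
  rw [mem_closedBall, Prod.dist_eq, max_le_iff] at hq
  have hslice : MapsTo (fun u => (u, w)) (closedBall x (ε / 3)) (closedBall p (ε / 2)) := by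
    intro u hu
    rw [mem_closedBall, Prod.dist_eq, max_le_iff]
    exact ⟨by linarith [dist_triangle u x p.1, mem_closedBall.mp hu], by linarith⟩
  have hg : DifferentiableOn ℂ (fun u => f (u, w)) (closedBall x (ε / 3)) :=
    (hf.mono hK).comp (differentiableOn_id.prodMk (differentiableOn_const w)) hslice
  have := Complex.norm_sub_taylor_le_of_forall_mem_sphere_norm_le (by positivity) hg
    (fun u hu => hM _ (hslice (sphere_subset_closedBall hu))) n (y := y) (by linarith)
  simp only [smul_eq_mul, ← mul_assoc, ← iterate_d1_apply] at this
  refine this.trans_eq ?_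
  rw [div_pow]
  ring

theorem norm_add_le_of_symm_of_odd {E : Type*} [NormedAddCommGroup E] [NormedSpace ℂ E]
    {k : ℕ} (hk : Odd k) {f : ℂ × ℂ → E} {a : ℂ → E} {s : Set ℂ} {δ C : ℝ}
    (hsym : ∀ u ∈ s, ∀ v ∈ s, f (u, v) = f (v, u))
    (htaylor : ∀ v ∈ s, ∀ y : ℂ, ‖y‖ ≤ δ → ‖f (v + y, v) - y ^ k • a v‖ ≤ C * ‖y‖ ^ (k + 1))
    {u v : ℂ} (hu : u ∈ s) (hv : v ∈ s) (huv : u ≠ v) (hδ : ‖u - v‖ ≤ δ) :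
    ‖a u + a v‖ ≤ 2 * C * ‖u - v‖ := by
  have hA := htaylor v hv (u - v) hδ
  have hB := htaylor u hu (v - u) (by rwa [norm_sub_rev])
  rw [add_sub_cancel] at hA hB
  rw [← neg_sub u v, hk.neg_pow, neg_smul, sub_neg_eq_add, norm_neg, ← hsym u hu v hv] at hB
  have hpos : 0 < ‖u - v‖ ^ k := pow_pos (norm_pos_iff.mpr (sub_ne_zero.mpr huv)) k
  refine le_of_mul_le_mul_right ?_ hpos
  calc ‖a u + a v‖ * ‖u - v‖ ^ k
      = ‖(f (u, v) + (u - v) ^ k • a u) - (f (u, v) - (u - v) ^ k • a v)‖ := by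
        rw [← norm_pow, mul_comm, ← norm_smul, smul_add]; congr 1; abel
    _ ≤ C * ‖u - v‖ ^ (k + 1) + C * ‖u - v‖ ^ (k + 1) :=
        (norm_sub_le _ _).trans (add_le_add hB hA)
    _ = 2 * C * ‖u - v‖ * ‖u - v‖ ^ k := by ring

theorem eq_zero_of_norm_add_le {D E : Type*} [NormedAddCommGroup D] [NormedSpace ℝ D]
    [Nontrivial D] [NormedAddCommGroup E] [NormedSpace ℝ E] {a : D → E} {z : D} {δ C : ℝ}
    (hδ : 0 < δ)
    (h : ∀ u ∈ closedBall z δ, ∀ v ∈ closedBall z δ, u ≠ v → ‖a u + a v‖ ≤ C * ‖u - v‖) :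
    a z = 0 := by
  obtain ⟨w, hw⟩ := exists_norm_eq D zero_le_one
  set P : ℝ → D := fun s => z + s • w
  have hdist : ∀ s s', ‖P s - P s'‖ = |s - s'| := fun s s' => by
    rw [add_sub_add_left_eq_sub, ← sub_smul, norm_smul, hw, mul_one, Real.norm_eq_abs]
  have hmem : ∀ s, |s| ≤ δ → P s ∈ closedBall z δ := fun s hs => by
    simpa [P, mem_closedBall, dist_eq_norm, norm_smul, hw] using hs
  have hne : ∀ s s', s ≠ s' → P s ≠ P s' := fun s s' hss' hP => by
    have := hdist s s'
    rw [hP, sub_self, norm_zero, eq_comm, abs_eq_zero, sub_eq_zero] at this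
    exact hss' this
  have hpair : ∀ s s', 0 ≤ s → s < s' → s' ≤ δ → ‖a (P s) + a (P s')‖ ≤ C * (s' - s) :=
    fun s s' hs hss' hs' => by
      rw [← abs_of_pos (sub_pos.2 hss'), abs_sub_comm, ← hdist]
      exact h _ (hmem s (by rw [abs_of_nonneg hs]; linarith))
        _ (hmem s' (by rw [abs_of_nonneg (by linarith)]; linarith)) (hne s s' hss'.ne)
  have hP₀ : P 0 = z := by simp [P]
  -- `h` says nothing about the pair `(z, z)`, so `a z + a z` is recovered from the three pairs
  -- among `z, P t, P (2 t)`.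
  have hsmall : ∀ t ∈ Ioo 0 (δ / 2), ‖a z + a z‖ ≤ 4 * C * t := by
    rintro t ⟨ht₀, htδ⟩
    calc ‖a z + a z‖
        = ‖(a (P 0) + a (P t)) + (a (P 0) + a (P (2 * t))) - (a (P t) + a (P (2 * t)))‖ := by
          rw [hP₀]; congr 1; abel
      _ ≤ C * (t - 0) + C * (2 * t - 0) + C * (2 * t - t) :=
          norm_sub_le_of_le (norm_add_le_of_le (hpair _ _ le_rfl ht₀ (by linarith))
            (hpair _ _ le_rfl (by linarith) (by linarith)))
            (hpair _ _ ht₀.le (by linarith) (by linarith))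
      _ = 4 * C * t := by ring
  have hlim : Tendsto (fun t => 4 * C * t) (𝓝[>] 0) (𝓝 0) := by
    simpa using ((continuous_const_mul (4 * C)).tendsto 0).mono_left nhdsWithin_le_nhds
  have hzz : a z + a z = 0 := norm_le_zero_iff.mp <|
    ge_of_tendsto hlim (eventually_of_mem (Ioo_mem_nhdsGT (by linarith)) hsmall)
  rw [← two_smul ℝ] at hzz
  exact (smul_eq_zero.mp hzz).resolve_left two_ne_zero

theorem stmt12_general (k : ℕ) (hk : Odd k) (f : ℂ × ℂ → ℂ)
    (hf : DifferentiableOn ℂ f (ball (0 : ℂ) 1 ×ˢ ball (0 : ℂ) 1))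
    (hsym : ∀ z₁ ∈ ball (0 : ℂ) 1, ∀ z₂ ∈ ball (0 : ℂ) 1, f (z₁, z₂) = f (z₂, z₁))
    (hvanish : ∀ i < k, ∀ z ∈ ball (0 : ℂ) 1, d1^[i] f (z, z) = 0) :
    ∀ z ∈ ball (0 : ℂ) 1, d1^[k] f (z, z) = 0 := by
  intro z hz
  obtain ⟨δ, hδ, hδU, C, hC⟩ := exists_norm_sub_taylor_d1_le (isOpen_ball.prod isOpen_ball) hf
    (mk_mem_prod hz hz) (k + 1)
  have hdiag : ∀ v ∈ closedBall z δ, (v, v) ∈ closedBall (z, z) δ := fun v hv => by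
    rwa [mem_closedBall, Prod.dist_eq, max_self]
  have hball : ∀ v ∈ closedBall z δ, v ∈ ball (0 : ℂ) 1 := fun v hv => (hδU (hdiag v hv)).1
  set a : ℂ → ℂ := fun v => (k ! : ℂ)⁻¹ * d1^[k] f (v, v)
  have htaylor : ∀ v ∈ closedBall z δ, ∀ y : ℂ, ‖y‖ ≤ δ →
      ‖f (v + y, v) - y ^ k • a v‖ ≤ C * ‖y‖ ^ (k + 1) := by
    intro v hv y hy
    have := hC (v, v) (hdiag v hv) y hy
    rw [sum_range_succ, sum_eq_zero fun i hi => by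
      rw [hvanish i (mem_range.mp hi) v (hball v hv), mul_zero], zero_add] at this
    convert this using 3
    simp only [a, smul_eq_mul]
    ring
  have ha : a z = 0 := eq_zero_of_norm_add_le (half_pos hδ) fun u hu v hv huv =>
    norm_add_le_of_symm_of_odd hk (fun u hu v hv => hsym u (hball u hu) v (hball v hv)) htaylor
      (closedBall_subset_closedBall (half_le_self hδ.le) hu)
      (closedBall_subset_closedBall (half_le_self hδ.le) hv) huv
      (by rw [← dist_eq_norm]; linarith [dist_triangle_right u v z, mem_closedBall.mp hu,
        mem_closedBall.mp hv])
  simpa [a, Nat.factorial_ne_zero] using ha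

/-- key claim in the proof of Theorem 2.8(ii): for a symmetric holomorphic
function on the bidisc and odd `k`, if `∂₁^i f` vanishes on the diagonal for all `i ≤ k − 1`,
then so does `∂₁^k f`. -/
theorem stmt12 (k : ℕ) (hk : Odd k) (hkpos : 0 < k) (f : ℂ × ℂ → ℂ)
    (hf : DifferentiableOn ℂ f (ball (0 : ℂ) 1 ×ˢ ball (0 : ℂ) 1))
    (hsym : ∀ z₁ ∈ ball (0 : ℂ) 1, ∀ z₂ ∈ ball (0 : ℂ) 1, f (z₁, z₂) = f (z₂, z₁))
    (hvanish : ∀ i < k, ∀ z ∈ ball (0 : ℂ) 1, d1^[i] f (z, z) = 0) :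
    ∀ z ∈ ball (0 : ℂ) 1, d1^[k] f (z, z) = 0 :=
  stmt12_general k hk f hf hsym hvanish
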